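/- The image of X = (ℂ² × (ℂ*)²) ∪ ((ℂ*)² × ℂ²) under the map π(x) = (x₁x₄, x₂x₄, x₃) equals ℂ³ \ (({0} × ℂ* × {0}) ∪ (ℂ* × {0} × {0})). -/

import Mathlib

/-! On the first piece of `X` the coordinate `x₃` survives in `π(x)`; on the second,
`x₁ x₂ ≠ 0` forces `x₁x₄` and `x₂x₄` to vanish together. Conversely every point with
`y₃ ≠ 0` or with `y₁ = 0 ↔ y₂ = 0` has the preimage `(y₁, y₂, y₃, 1)`, except the origin,
which is `π(1, 1, 0, 0)`. -/

def Xset : Set (ℂ × ℂ × ℂ × ℂ) :=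
  {x | (x.2.2.1 ≠ 0 ∧ x.2.2.2 ≠ 0) ∨ (x.1 ≠ 0 ∧ x.2.1 ≠ 0)}

def piMap (x : ℂ × ℂ × ℂ × ℂ) : ℂ × ℂ × ℂ :=
  (x.1 * x.2.2.2, x.2.1 * x.2.2.2, x.2.2.1)

def piImage : Set (ℂ × ℂ × ℂ) :=
  {y | y.2.2 ≠ 0 ∨ (y.1 = 0 ↔ y.2.1 = 0)}

theorem piImage_eq :
    piImage = {y : ℂ × ℂ × ℂ | y.1 = 0 ∧ y.2.1 ≠ 0 ∧ y.2.2 = 0}ᶜ ∩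
      {y : ℂ × ℂ × ℂ | y.1 ≠ 0 ∧ y.2.1 = 0 ∧ y.2.2 = 0}ᶜ := by
  ext ⟨y₁, y₂, y₃⟩
  simp only [piImage, Set.mem_inter_iff, Set.mem_compl_iff, Set.mem_ofPred_eq]
  tauto

theorem mapsTo_piMap : Set.MapsTo piMap Xset piImage := by
  rintro ⟨x₁, x₂, x₃, x₄⟩ (⟨h₃, -⟩ | ⟨h₁, h₂⟩)
  · exact Or.inl h₃
  · exact Or.inr <| (mul_eq_zero_iff_left h₁).trans (mul_eq_zero_iff_left h₂).symm

theorem surjOn_piMap : Set.SurjOn piMap Xset piImage := by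
  rintro ⟨y₁, y₂, y₃⟩ hy
  by_cases h₃ : y₃ = 0
  · have hy : y₁ = 0 ↔ y₂ = 0 := hy.resolve_left (not_not.mpr h₃)
    by_cases h₁ : y₁ = 0
    · have h₂ : y₂ = 0 := hy.mp h₁
      exact ⟨(1, 1, 0, 0), Or.inr ⟨one_ne_zero, one_ne_zero⟩, by simp [piMap, h₁, h₂, h₃]⟩
    · have h₂ : y₂ ≠ 0 := mt hy.mpr h₁
      exact ⟨(y₁, y₂, y₃, 1), Or.inr ⟨h₁, h₂⟩, by simp [piMap]⟩
  · exact ⟨(y₁, y₂, y₃, 1), Or.inl ⟨h₃, one_ne_zero⟩, by simp [piMap]⟩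

/-- π(X) = ℂ³ \ (({0} × ℂ* × {0}) ∪ (ℂ* × {0} × {0})). -/
theorem image_of_X :
    piMap '' Xset =
      {y : ℂ × ℂ × ℂ | y.1 = 0 ∧ y.2.1 ≠ 0 ∧ y.2.2 = 0}ᶜ ∩
      {y : ℂ × ℂ × ℂ | y.1 ≠ 0 ∧ y.2.1 = 0 ∧ y.2.2 = 0}ᶜ := by
  rw [← piImage_eq]
  exact surjOn_piMap.image_eq_of_mapsTo mapsTo_piMap
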